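/- Let (A⊗V,μ_{A⊗V}) and (A⊗W,μ_{A⊗W}) be weak crossed products with preunits ν_V and ν_W. Suppose there exist morphisms γ:V→A⊗W and θ:W→A⊗V satisfying: ν_V=(μ_A⊗V)∘(A⊗θ)∘ν_W; θ=∇_{A⊗V}∘θ; ψ_W=(μ_A⊗W)∘(μ_A⊗γ)∘(A⊗ψ_V)∘(θ⊗A); σ_W=(μ_A⊗W)∘(A⊗γ)∘μ_{A⊗V}∘(θ⊗θ); and (μ_A⊗V)∘(A⊗θ)∘γ=∇_{A⊗V}∘(η_A⊗V). Then the morphisms T:=(μ_A⊗W)∘(A⊗γ):A⊗V→A⊗W and S:=(μ_A⊗V)∘(A⊗θ):A⊗W→A⊗V are left A-linear and satisfy T∘ν_V=ν_W, T∘μ_{A⊗V}=μ_{A⊗W}∘(T⊗T), S∘T=∇_{A⊗V}, and T∘S=∇_{A⊗W}. -/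

import Mathlib

open CategoryTheory MonoidalCategory

universe v u

namespace WeakCrossed

variable {C : Type u} [Category.{v} C] [MonoidalCategory C]

/-- The monoid axioms for a triple `(A, η, μ)` in a monoidal category. -/
def IsMon (A : C) (eta : 𝟙_ C ⟶ A) (mu : A ⊗ A ⟶ A) : Prop :=
  (eta ▷ A) ≫ mu = (λ_ A).hom ∧ (A ◁ eta) ≫ mu = (ρ_ A).hom ∧
    (mu ▷ A) ≫ mu = (α_ A A A).hom ≫ (A ◁ mu) ≫ mu

/-- The morphism `(μ_A ⊗ Y) ∘ (A ⊗ f) : (A ⊗ X) ⊗ Z ⟶ A ⊗ Y` for `f : X ⊗ Z ⟶ A ⊗ Y`. -/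
def phi (A : C) {X Z Y : C} (mu : A ⊗ A ⟶ A) (f : X ⊗ Z ⟶ A ⊗ Y) :
    (A ⊗ X) ⊗ Z ⟶ A ⊗ Y :=
  (α_ A X Z).hom ≫ (A ◁ f) ≫ (α_ A A Y).inv ≫ (mu ▷ Y)

/-- The measuring condition `(μ_A ⊗ V) ∘ (A ⊗ ψ) ∘ (ψ ⊗ A) = ψ ∘ (V ⊗ μ_A)`. -/
def Measuring (A V : C) (mu : A ⊗ A ⟶ A) (psi : V ⊗ A ⟶ A ⊗ V) : Prop :=
  (psi ▷ A) ≫ phi A mu psi = (α_ V A A).hom ≫ (V ◁ mu) ≫ psi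

/-- The idempotent `∇_{A⊗V} = (μ_A ⊗ V) ∘ (A ⊗ ψ) ∘ (A ⊗ V ⊗ η_A)`. -/
def nabla (A V : C) (eta : 𝟙_ C ⟶ A) (mu : A ⊗ A ⟶ A) (psi : V ⊗ A ⟶ A ⊗ V) :
    A ⊗ V ⟶ A ⊗ V :=
  (ρ_ (A ⊗ V)).inv ≫ ((A ⊗ V) ◁ eta) ≫ phi A mu psi

/-- The twisted condition
`(μ_A ⊗ V) ∘ (A ⊗ ψ) ∘ (σ ⊗ A) = (μ_A ⊗ V) ∘ (A ⊗ σ) ∘ (ψ ⊗ V) ∘ (V ⊗ ψ)`. -/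
def Twisted (A V : C) (mu : A ⊗ A ⟶ A) (psi : V ⊗ A ⟶ A ⊗ V)
    (sig : V ⊗ V ⟶ A ⊗ V) : Prop :=
  (sig ▷ A) ≫ phi A mu psi =
    (α_ V V A).hom ≫ (V ◁ psi) ≫ (α_ V A V).inv ≫ (psi ▷ V) ≫ phi A mu sig

/-- The cocycle condition
`(μ_A ⊗ V) ∘ (A ⊗ σ) ∘ (σ ⊗ V) = (μ_A ⊗ V) ∘ (A ⊗ σ) ∘ (ψ ⊗ V) ∘ (V ⊗ σ)`. -/
def Cocycle (A V : C) (mu : A ⊗ A ⟶ A) (psi : V ⊗ A ⟶ A ⊗ V)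
    (sig : V ⊗ V ⟶ A ⊗ V) : Prop :=
  (sig ▷ V) ≫ phi A mu sig =
    (α_ V V V).hom ≫ (V ◁ sig) ≫ (α_ V A V).inv ≫ (psi ▷ V) ≫ phi A mu sig

/-- The weak crossed product multiplication
`μ_{A⊗V} = (μ_A ⊗ V) ∘ (μ_A ⊗ σ) ∘ (A ⊗ ψ ⊗ V)`. -/
def prodAV (A V : C) (mu : A ⊗ A ⟶ A) (psi : V ⊗ A ⟶ A ⊗ V)
    (sig : V ⊗ V ⟶ A ⊗ V) : (A ⊗ V) ⊗ (A ⊗ V) ⟶ A ⊗ V :=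
  (α_ A V (A ⊗ V)).hom ≫ (A ◁ ((α_ V A V).inv ≫ (psi ▷ V) ≫ (α_ A V V).hom)) ≫
    (α_ A A (V ⊗ V)).inv ≫ (mu ⊗ₘ sig) ≫ (α_ A A V).inv ≫ (mu ▷ V)

/-- The morphism `η_A ⊗ V : V ⟶ A ⊗ V`. -/
def etaT (A V : C) (eta : 𝟙_ C ⟶ A) : V ⟶ A ⊗ V := (λ_ V).inv ≫ (eta ▷ V)

/-- The morphism `β_ν = (μ_A ⊗ V) ∘ (A ⊗ ν) : A ⟶ A ⊗ V`. -/
def beta (A V : C) (mu : A ⊗ A ⟶ A) (nu : 𝟙_ C ⟶ A ⊗ V) : A ⟶ A ⊗ V :=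
  (ρ_ A).inv ≫ (A ◁ nu) ≫ (α_ A A V).inv ≫ (mu ▷ V)

/-- Preunit condition (pre1):
`(μ_A ⊗ V) ∘ (A ⊗ σ) ∘ (ψ ⊗ V) ∘ (V ⊗ ν) = ∇_{A⊗V} ∘ (η_A ⊗ V)`. -/
def Pre1 (A V : C) (eta : 𝟙_ C ⟶ A) (mu : A ⊗ A ⟶ A) (psi : V ⊗ A ⟶ A ⊗ V)
    (sig : V ⊗ V ⟶ A ⊗ V) (nu : 𝟙_ C ⟶ A ⊗ V) : Prop :=
  (ρ_ V).inv ≫ (V ◁ nu) ≫ (α_ V A V).inv ≫ (psi ▷ V) ≫ phi A mu sig =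
    etaT A V eta ≫ nabla A V eta mu psi

/-- Preunit condition (pre2):
`(μ_A ⊗ V) ∘ (A ⊗ σ) ∘ (ν ⊗ V) = ∇_{A⊗V} ∘ (η_A ⊗ V)`. -/
def Pre2 (A V : C) (eta : 𝟙_ C ⟶ A) (mu : A ⊗ A ⟶ A) (psi : V ⊗ A ⟶ A ⊗ V)
    (sig : V ⊗ V ⟶ A ⊗ V) (nu : 𝟙_ C ⟶ A ⊗ V) : Prop :=
  (λ_ V).inv ≫ (nu ▷ V) ≫ phi A mu sig = etaT A V eta ≫ nabla A V eta mu psi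

/-- Preunit condition (pre3): `(μ_A ⊗ V) ∘ (A ⊗ ψ) ∘ (ν ⊗ A) = β_ν`. -/
def Pre3 (A V : C) (mu : A ⊗ A ⟶ A) (psi : V ⊗ A ⟶ A ⊗ V)
    (nu : 𝟙_ C ⟶ A ⊗ V) : Prop :=
  (λ_ A).inv ≫ (nu ▷ A) ≫ phi A mu psi = beta A V mu nu

/-- `(A ⊗ V, μ_{A⊗V})` is a weak crossed product: measuring, twisted and cocycle
conditions hold and `∇_{A⊗V} ∘ σ = σ`. -/
def WCP (A V : C) (eta : 𝟙_ C ⟶ A) (mu : A ⊗ A ⟶ A) (psi : V ⊗ A ⟶ A ⊗ V)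
    (sig : V ⊗ V ⟶ A ⊗ V) : Prop :=
  Measuring A V mu psi ∧ Twisted A V mu psi sig ∧ Cocycle A V mu psi sig ∧
    sig ≫ nabla A V eta mu psi = sig

/-- `(A ⊗ V, μ_{A⊗V})` is a weak crossed product with preunit `ν`. -/
def WCPpre (A V : C) (eta : 𝟙_ C ⟶ A) (mu : A ⊗ A ⟶ A) (psi : V ⊗ A ⟶ A ⊗ V)
    (sig : V ⊗ V ⟶ A ⊗ V) (nu : 𝟙_ C ⟶ A ⊗ V) : Prop :=
  WCP A V eta mu psi sig ∧ Pre1 A V eta mu psi sig nu ∧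
    Pre2 A V eta mu psi sig nu ∧ Pre3 A V mu psi nu

/-- `(μ_A ⊗ Y) ∘ (A ⊗ γ) : A ⊗ X ⟶ A ⊗ Y` for `γ : X ⟶ A ⊗ Y`. -/
def tmap (A : C) {X Y : C} (mu : A ⊗ A ⟶ A) (g : X ⟶ A ⊗ Y) : A ⊗ X ⟶ A ⊗ Y :=
  (A ◁ g) ≫ (α_ A A Y).inv ≫ (mu ▷ Y)

/-- Left `A`-linearity of `T : A ⊗ X ⟶ A ⊗ Y`:
`T ∘ (μ_A ⊗ X) = (μ_A ⊗ Y) ∘ (A ⊗ T)`. -/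
def LeftLin (A : C) {X Y : C} (mu : A ⊗ A ⟶ A) (T : A ⊗ X ⟶ A ⊗ Y) : Prop :=
  (mu ▷ X) ≫ T = (α_ A A X).hom ≫ (A ◁ T) ≫ (α_ A A Y).inv ≫ (mu ▷ Y)

/-- `ν` is a preunit for the associative product `m` on `X`. -/
def IsPreunit {X : C} (m : X ⊗ X ⟶ X) (nu : 𝟙_ C ⟶ X) : Prop :=
  (ρ_ X).inv ≫ (X ◁ nu) ≫ m = (λ_ X).inv ≫ (nu ▷ X) ≫ m ∧
  (ρ_ X).inv ≫ (X ◁ nu) ≫ m =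
    (ρ_ X).inv ≫ (X ◁ ((λ_ (𝟙_ C)).inv ≫ (nu ⊗ₘ nu) ≫ m)) ≫ m

/-- Brzeziński normalization conditions: `ψ ∘ (η_V ⊗ A) = A ⊗ η_V`,
`ψ ∘ (V ⊗ η_A) = η_A ⊗ V`, `σ ∘ (η_V ⊗ V) = σ ∘ (V ⊗ η_V) = η_A ⊗ V`. -/
def BrzNorm (A V : C) (eta : 𝟙_ C ⟶ A) (etaV : 𝟙_ C ⟶ V) (psi : V ⊗ A ⟶ A ⊗ V)
    (sig : V ⊗ V ⟶ A ⊗ V) : Prop :=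
  (λ_ A).inv ≫ (etaV ▷ A) ≫ psi = (ρ_ A).inv ≫ (A ◁ etaV) ∧
  (ρ_ V).inv ≫ (V ◁ eta) ≫ psi = (λ_ V).inv ≫ (eta ▷ V) ∧
  (λ_ V).inv ≫ (etaV ▷ V) ≫ sig = (λ_ V).inv ≫ (eta ▷ V) ∧
  (ρ_ V).inv ≫ (V ◁ etaV) ≫ sig = (λ_ V).inv ≫ (eta ▷ V)

/-!
`T` and `S` are the left `A`-linear extensions of `γ` and `θ`, so their linearity and the
identities `S ∘ T = ∇_{A⊗V}`, `T ∘ S = ∇_{A⊗W}` are computations in the free left `A`-module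
`A ⊗ X`: `tmap f ≫ tmap h = tmap (f ≫ tmap h)` and `etaT ≫ tmap f = f`.

For multiplicativity, read `phi ψ = (μ_A ⊗ V) ∘ (A ⊗ ψ)` as a right action of `A` on `A ⊗ V`.
Then `μ_{A⊗V} = phi σ ∘ (phi ψ ⊗ V)`; the measuring condition makes `μ_{A⊗V}` balanced over
this action, and the twisted condition together with `∇ ∘ σ = σ` makes it absorb `∇` in either
argument. The hypotheses on `ψ_W` and `σ_W` say that the action and the cocycle of `W` are those
of `V` transported along `S` and `T`; this gives `μ_{A⊗W} = T ∘ μ_{A⊗V} ∘ (S ⊗ S)`, hence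
`μ_{A⊗W} ∘ (T ⊗ T) = T ∘ μ_{A⊗V} ∘ (∇ ⊗ ∇) = T ∘ μ_{A⊗V}`.
-/

theorem rightUnitor_inv_whiskerLeft_naturality {A X Y : C} (eta : 𝟙_ C ⟶ A) (f : X ⟶ Y) :
    f ≫ (ρ_ Y).inv ≫ (Y ◁ eta) = (ρ_ X).inv ≫ (X ◁ eta) ≫ (f ▷ A) := by
  rw [rightUnitor_inv_naturality_assoc, whisker_exchange]

section Monoid

variable {A : C} {eta : 𝟙_ C ⟶ A} {mu : A ⊗ A ⟶ A}

theorem tmap_leftLin (hA : IsMon A eta mu) {X Y : C} (f : X ⟶ A ⊗ Y) :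
    LeftLin A mu (tmap A mu f) := by
  simp only [LeftLin, tmap, MonoidalCategory.whiskerLeft_comp, Category.assoc]
  slice_lhs 1 2 => rw [← whisker_exchange]
  slice_lhs 2 3 => rw [associator_inv_naturality_left]
  slice_lhs 3 4 => rw [← comp_whiskerRight, hA.2.2]
  slice_rhs 4 5 => rw [associator_inv_naturality_middle]
  simp only [comp_whiskerRight, Category.assoc]
  monoidal

theorem tmap_comp (hA : IsMon A eta mu) {X Y Z : C} (f : X ⟶ A ⊗ Y) (h : Y ⟶ A ⊗ Z) :
    tmap A mu f ≫ tmap A mu h = tmap A mu (f ≫ tmap A mu h) := by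
  have hh : (mu ▷ Y) ≫ tmap A mu h = _ := tmap_leftLin hA h
  simp only [tmap, MonoidalCategory.whiskerLeft_comp, Category.assoc] at hh ⊢
  rw [hh]
  simp

theorem etaT_tmap (hA : IsMon A eta mu) {X Y : C} (f : X ⟶ A ⊗ Y) :
    etaT A X eta ≫ tmap A mu f = f := by
  simp only [etaT, tmap, Category.assoc]
  slice_lhs 2 3 => rw [← whisker_exchange]
  slice_lhs 3 4 => rw [associator_inv_naturality_left]
  slice_lhs 4 5 => rw [← comp_whiskerRight, hA.1]
  monoidal

theorem phi_eq_tmap {X Z Y : C} (f : X ⊗ Z ⟶ A ⊗ Y) :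
    phi A mu f = (α_ A X Z).hom ≫ tmap A mu f := rfl

theorem whiskerLeft_tmap {X X' Y : C} (e : X ⟶ X') (f : X' ⟶ A ⊗ Y) :
    (A ◁ e) ≫ tmap A mu f = tmap A mu (e ≫ f) := by
  simp only [tmap, MonoidalCategory.whiskerLeft_comp, Category.assoc]

theorem phi_tmap (hA : IsMon A eta mu) {X Z Y B : C} (f : X ⊗ Z ⟶ A ⊗ Y)
    (h : Y ⟶ A ⊗ B) : phi A mu f ≫ tmap A mu h = phi A mu (f ≫ tmap A mu h) := by
  rw [phi_eq_tmap, phi_eq_tmap, Category.assoc, tmap_comp hA]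

theorem whiskerLeft_phi {X Z Z' Y : C} (f : X ⊗ Z' ⟶ A ⊗ Y) (h : Z ⟶ Z') :
    ((A ⊗ X) ◁ h) ≫ phi A mu f = phi A mu ((X ◁ h) ≫ f) := by
  simp only [phi, MonoidalCategory.whiskerLeft_comp, associator_naturality_right_assoc,
    Category.assoc]

theorem tmap_whiskerRight {X X' Z : C} (q : X ⟶ A ⊗ X') :
    (tmap A mu q ▷ Z) ≫ (α_ A X' Z).hom =
      (α_ A X Z).hom ≫ tmap A mu ((q ▷ Z) ≫ (α_ A X' Z).hom) := by
  simp only [tmap, comp_whiskerRight, MonoidalCategory.whiskerLeft_comp, Category.assoc]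
  rw [associator_naturality_left]
  monoidal

theorem tmap_whiskerRight_phi (hA : IsMon A eta mu) {X X' Z Y : C} (q : X ⟶ A ⊗ X')
    (f : X' ⊗ Z ⟶ A ⊗ Y) :
    (tmap A mu q ▷ Z) ≫ phi A mu f = phi A mu ((q ▷ Z) ≫ phi A mu f) := by
  rw [phi_eq_tmap, phi_eq_tmap, reassoc_of% tmap_whiskerRight, tmap_comp hA, Category.assoc]

theorem whiskerRight_phi_phi (hA : IsMon A eta mu) {X B X' Z Y : C} (q : X ⊗ B ⟶ A ⊗ X')
    (f : X' ⊗ Z ⟶ A ⊗ Y) :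
    (phi A mu q ▷ Z) ≫ phi A mu f =
      (α_ (A ⊗ X) B Z).hom ≫ phi A mu ((α_ X B Z).inv ≫ (q ▷ Z) ≫ phi A mu f) := by
  simp only [phi_eq_tmap, comp_whiskerRight, Category.assoc]
  rw [reassoc_of% tmap_whiskerRight, tmap_comp hA, ← whiskerLeft_tmap (α_ X B Z).inv]
  simp only [Category.assoc]
  rw [← pentagon_assoc]
  simp

theorem phi_whiskerRight_phi_tmap (hA : IsMon A eta mu) {X X' Z Y B : C} (q : X ⟶ A ⊗ X')
    (f : X' ⊗ Z ⟶ A ⊗ Y) (h : Y ⟶ A ⊗ B) :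
    phi A mu ((q ▷ Z) ≫ phi A mu f ≫ tmap A mu h) =
      (tmap A mu q ▷ Z) ≫ phi A mu f ≫ tmap A mu h := by
  rw [phi_tmap hA, tmap_whiskerRight_phi hA]

theorem nabla_eq_tmap {V : C} (psi : V ⊗ A ⟶ A ⊗ V) :
    nabla A V eta mu psi = tmap A mu ((ρ_ V).inv ≫ (V ◁ eta) ≫ psi) := by
  simp only [nabla, tmap, phi, MonoidalCategory.whiskerLeft_comp, Category.assoc]
  slice_lhs 2 3 => rw [associator_naturality_right]
  monoidal

theorem Pre3.nu_nabla (hA : IsMon A eta mu) {V : C} {psi : V ⊗ A ⟶ A ⊗ V}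
    {nu : 𝟙_ C ⟶ A ⊗ V} (hp : Pre3 A V mu psi nu) :
    nu ≫ nabla A V eta mu psi = nu := by
  have hswap : nu ≫ nabla A V eta mu psi = eta ≫ (λ_ A).inv ≫ (nu ▷ A) ≫ phi A mu psi := by
    rw [nabla, reassoc_of% rightUnitor_inv_whiskerLeft_naturality, ← unitors_inv_equal,
      leftUnitor_inv_naturality_assoc]
  rw [hswap, hp, beta]
  slice_lhs 1 2 => rw [rightUnitor_inv_naturality]
  slice_lhs 2 3 => rw [← whisker_exchange]
  slice_lhs 3 4 => rw [associator_inv_naturality_left]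
  slice_lhs 4 5 => rw [← comp_whiskerRight, hA.1]
  monoidal

theorem prodAV_eq_phi (hA : IsMon A eta mu) {V : C} (psi : V ⊗ A ⟶ A ⊗ V)
    (sig : V ⊗ V ⟶ A ⊗ V) :
    prodAV A V mu psi sig = phi A mu ((α_ V A V).inv ≫ (psi ▷ V) ≫ phi A mu sig) := by
  simp only [prodAV, phi, MonoidalCategory.tensorHom_def, MonoidalCategory.whiskerLeft_comp,
    Category.assoc]
  slice_lhs 6 7 => rw [← whisker_exchange]
  slice_lhs 7 8 => rw [associator_inv_naturality_left]
  slice_lhs 8 9 => rw [← comp_whiskerRight, hA.2.2]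
  slice_rhs 7 8 => rw [associator_inv_naturality_middle]
  simp only [comp_whiskerRight, Category.assoc]
  monoidal

theorem prodAV_eq_whiskerRight_phi (hA : IsMon A eta mu) {V : C} (psi : V ⊗ A ⟶ A ⊗ V)
    (sig : V ⊗ V ⟶ A ⊗ V) :
    prodAV A V mu psi sig = (α_ (A ⊗ V) A V).inv ≫ (phi A mu psi ▷ V) ≫ phi A mu sig := by
  rw [whiskerRight_phi_phi hA, Iso.inv_hom_id_assoc, prodAV_eq_phi hA]

end Monoid

section Measuring

variable {A V : C} {eta : 𝟙_ C ⟶ A} {mu : A ⊗ A ⟶ A} {psi : V ⊗ A ⟶ A ⊗ V}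

theorem Measuring.whiskerLeft_mu_comp (hm : Measuring A V mu psi) :
    (V ◁ mu) ≫ psi = (α_ V A A).inv ≫ (psi ▷ A) ≫ phi A mu psi := by
  rw [hm, Iso.inv_hom_id_assoc]

theorem Measuring.psi_nabla (hA : IsMon A eta mu) (hm : Measuring A V mu psi) :
    psi ≫ nabla A V eta mu psi = psi := by
  have hunit : (ρ_ (V ⊗ A)).inv ≫ ((V ⊗ A) ◁ eta) ≫ (α_ V A A).hom ≫ (V ◁ mu) = 𝟙 _ := by
    calc _ = V ◁ ((ρ_ A).inv ≫ (A ◁ eta) ≫ mu) := by monoidal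
      _ = 𝟙 _ := by rw [hA.2.1]; simp
  rw [nabla, reassoc_of% rightUnitor_inv_whiskerLeft_naturality, hm, reassoc_of% hunit]

theorem Measuring.phi_nabla (hA : IsMon A eta mu) (hm : Measuring A V mu psi) :
    phi A mu psi ≫ nabla A V eta mu psi = phi A mu psi := by
  rw [nabla_eq_tmap, phi_tmap hA, ← nabla_eq_tmap, hm.psi_nabla hA]

theorem Measuring.nabla_whiskerRight_phi (hA : IsMon A eta mu) (hm : Measuring A V mu psi) :
    (nabla A V eta mu psi ▷ A) ≫ phi A mu psi = phi A mu psi := by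
  simp only [nabla, comp_whiskerRight, Category.assoc]
  rw [whiskerRight_phi_phi hA, ← hm.whiskerLeft_mu_comp, ← whiskerLeft_phi]
  slice_lhs 2 3 => rw [associator_naturality_middle]
  slice_lhs 3 4 => rw [← MonoidalCategory.whiskerLeft_comp, hA.1]
  monoidal

theorem Measuring.whiskerLeft_mul_comp (hA : IsMon A eta mu) (hm : Measuring A V mu psi)
    {B Y : C} (r : V ⊗ B ⟶ A ⊗ Y) :
    (V ◁ ((α_ A A B).inv ≫ (mu ▷ B))) ≫ (α_ V A B).inv ≫ (psi ▷ B) ≫ phi A mu r =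
      (α_ V A (A ⊗ B)).inv ≫ (psi ▷ (A ⊗ B)) ≫
        phi A mu ((α_ V A B).inv ≫ (psi ▷ B) ≫ phi A mu r) := by
  rw [← Iso.inv_hom_id_assoc (α_ (A ⊗ V) A B) (phi A mu _), ← whiskerRight_phi_phi hA]
  simp only [MonoidalCategory.whiskerLeft_comp, Category.assoc]
  slice_lhs 2 3 => rw [associator_inv_naturality_middle]
  slice_lhs 3 4 => rw [← comp_whiskerRight, hm.whiskerLeft_mu_comp]
  simp only [comp_whiskerRight, Category.assoc]
  monoidal

theorem Measuring.prodAV_balanced (hA : IsMon A eta mu) (hm : Measuring A V mu psi)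
    (sig : V ⊗ V ⟶ A ⊗ V) :
    (α_ (A ⊗ V) A (A ⊗ V)).inv ≫ (phi A mu psi ▷ (A ⊗ V)) ≫ prodAV A V mu psi sig =
      ((A ⊗ V) ◁ ((α_ A A V).inv ≫ (mu ▷ V))) ≫ prodAV A V mu psi sig := by
  rw [prodAV_eq_phi hA, whiskerRight_phi_phi hA, whiskerLeft_phi, hm.whiskerLeft_mul_comp hA,
    Iso.inv_hom_id_assoc]

theorem Measuring.nabla_whiskerRight_prodAV (hA : IsMon A eta mu) (hm : Measuring A V mu psi)
    (sig : V ⊗ V ⟶ A ⊗ V) :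
    (nabla A V eta mu psi ▷ (A ⊗ V)) ≫ prodAV A V mu psi sig = prodAV A V mu psi sig := by
  rw [prodAV_eq_whiskerRight_phi hA, associator_inv_naturality_left_assoc,
    ← comp_whiskerRight_assoc, hm.nabla_whiskerRight_phi hA]

end Measuring

section WCP

variable {A V : C} {eta : 𝟙_ C ⟶ A} {mu : A ⊗ A ⟶ A} {psi : V ⊗ A ⟶ A ⊗ V}
  {sig : V ⊗ V ⟶ A ⊗ V}

theorem WCP.whiskerLeft_psi_eta_comp (hw : WCP A V eta mu psi sig) :
    (V ◁ ((ρ_ V).inv ≫ (V ◁ eta) ≫ psi)) ≫ (α_ V A V).inv ≫ (psi ▷ V) ≫ phi A mu sig =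
      sig := by
  obtain ⟨-, htw, -, hns⟩ := hw
  have htw' : (V ◁ psi) ≫ (α_ V A V).inv ≫ (psi ▷ V) ≫ phi A mu sig =
      (α_ V V A).inv ≫ (sig ▷ A) ≫ phi A mu psi := by
    rw [htw, Iso.inv_hom_id_assoc]
  have hunit : (V ◁ (ρ_ V).inv) ≫ (V ◁ V ◁ eta) ≫ (α_ V V A).inv =
      (ρ_ (V ⊗ V)).inv ≫ ((V ⊗ V) ◁ eta) := by monoidal
  simp only [MonoidalCategory.whiskerLeft_comp, Category.assoc]
  rw [htw', reassoc_of% hunit, ← reassoc_of% rightUnitor_inv_whiskerLeft_naturality]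
  exact hns

theorem WCP.whiskerLeft_nabla_prodAV (hA : IsMon A eta mu) (hw : WCP A V eta mu psi sig) :
    ((A ⊗ V) ◁ nabla A V eta mu psi) ≫ prodAV A V mu psi sig = prodAV A V mu psi sig := by
  have hpsi_eta : ((A ⊗ V) ◁ ((ρ_ V).inv ≫ (V ◁ eta) ≫ psi)) ≫ prodAV A V mu psi sig =
      phi A mu sig := by
    rw [prodAV_eq_phi hA, whiskerLeft_phi, hw.whiskerLeft_psi_eta_comp]
  conv_lhs => rw [nabla_eq_tmap, tmap, MonoidalCategory.whiskerLeft_comp_assoc,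
    ← hw.1.prodAV_balanced hA, associator_inv_naturality_right_assoc,
    whisker_exchange_assoc, hpsi_eta]
  rw [prodAV_eq_whiskerRight_phi hA]

theorem WCP.tensorHom_nabla_prodAV (hA : IsMon A eta mu) (hw : WCP A V eta mu psi sig) :
    (nabla A V eta mu psi ⊗ₘ nabla A V eta mu psi) ≫ prodAV A V mu psi sig =
      prodAV A V mu psi sig := by
  rw [MonoidalCategory.tensorHom_def, Category.assoc, hw.whiskerLeft_nabla_prodAV hA,
    hw.1.nabla_whiskerRight_prodAV hA]

end WCP

theorem prodAV_eq_transport {A V W : C} {eta : 𝟙_ C ⟶ A} {mu : A ⊗ A ⟶ A}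
    (hA : IsMon A eta mu) {psiV : V ⊗ A ⟶ A ⊗ V}
    (hm : Measuring A V mu psiV) (sigV : V ⊗ V ⟶ A ⊗ V) {psiW : W ⊗ A ⟶ A ⊗ W}
    (sigW : W ⊗ W ⟶ A ⊗ W) (T : A ⊗ V ⟶ A ⊗ W) (th : W ⟶ A ⊗ V)
    (hpsi : phi A mu psiW = (tmap A mu th ▷ A) ≫ phi A mu psiV ≫ T)
    (hsig : phi A mu sigW =
      (tmap A mu th ▷ W) ≫ ((A ⊗ V) ◁ th) ≫ prodAV A V mu psiV sigV ≫ T)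
    (hTS : T ≫ tmap A mu th = nabla A V eta mu psiV) :
    prodAV A W mu psiW sigW =
      (tmap A mu th ⊗ₘ tmap A mu th) ≫ prodAV A V mu psiV sigV ≫ T := by
  rw [prodAV_eq_whiskerRight_phi hA psiW sigW, hpsi, hsig]
  simp only [comp_whiskerRight, Category.assoc]
  rw [← comp_whiskerRight_assoc T, hTS, ← comp_whiskerRight_assoc (phi A mu psiV),
    hm.phi_nabla hA, ← whisker_exchange_assoc, ← whisker_exchange_assoc,
    ← associator_inv_naturality_right_assoc, ← associator_inv_naturality_left_assoc,
    reassoc_of% hm.prodAV_balanced hA sigV, ← whisker_exchange_assoc,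
    MonoidalCategory.tensorHom_def']
  simp only [tmap, MonoidalCategory.whiskerLeft_comp, Category.assoc]

/-- Theorem, (iii) ⟹ (ii): from `γ`, `θ` one obtains left
`A`-linear `T = (μ_A⊗W)∘(A⊗γ)` and `S = (μ_A⊗V)∘(A⊗θ)` with the required
properties. -/
theorem gamma_theta_gives_TS (A V W : C) (eta : 𝟙_ C ⟶ A) (mu : A ⊗ A ⟶ A)
    (hA : IsMon A eta mu)
    (psiV : V ⊗ A ⟶ A ⊗ V) (sigV : V ⊗ V ⟶ A ⊗ V) (nuV : 𝟙_ C ⟶ A ⊗ V)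
    (psiW : W ⊗ A ⟶ A ⊗ W) (sigW : W ⊗ W ⟶ A ⊗ W) (nuW : 𝟙_ C ⟶ A ⊗ W)
    (hV : WCPpre A V eta mu psiV sigV nuV) (hW : WCPpre A W eta mu psiW sigW nuW)
    (g : V ⟶ A ⊗ W) (th : W ⟶ A ⊗ V)
    (h1 : nuV = nuW ≫ tmap A mu th)
    (h2 : th = th ≫ nabla A V eta mu psiV)
    (h3 : psiW = (th ▷ A) ≫ (α_ A V A).hom ≫ (A ◁ psiV) ≫ (α_ A A V).inv ≫
      (mu ⊗ₘ g) ≫ (α_ A A W).inv ≫ (mu ▷ W))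
    (h4 : sigW = (th ⊗ₘ th) ≫ prodAV A V mu psiV sigV ≫ tmap A mu g)
    (h5 : g ≫ tmap A mu th = etaT A V eta ≫ nabla A V eta mu psiV) :
    LeftLin A mu (tmap A mu g) ∧ LeftLin A mu (tmap A mu th) ∧
    nuV ≫ tmap A mu g = nuW ∧
    prodAV A V mu psiV sigV ≫ tmap A mu g =
      (tmap A mu g ⊗ₘ tmap A mu g) ≫ prodAV A W mu psiW sigW ∧
    tmap A mu g ≫ tmap A mu th = nabla A V eta mu psiV ∧
    tmap A mu th ≫ tmap A mu g = nabla A W eta mu psiW := by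
  have hpsi : phi A mu psiW = (tmap A mu th ▷ A) ≫ phi A mu psiV ≫ tmap A mu g := by
    rw [← phi_whiskerRight_phi_tmap hA, h3]
    simp only [phi, tmap, MonoidalCategory.tensorHom_def, MonoidalCategory.whiskerLeft_comp,
      Category.assoc]
  have hsig : phi A mu sigW = (tmap A mu th ▷ W) ≫ ((A ⊗ V) ◁ th) ≫
      prodAV A V mu psiV sigV ≫ tmap A mu g := by
    rw [h4, MonoidalCategory.tensorHom_def, Category.assoc, prodAV_eq_phi hA,
      reassoc_of% whiskerLeft_phi, phi_whiskerRight_phi_tmap hA]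
  have hTS : tmap A mu g ≫ tmap A mu th = nabla A V eta mu psiV := by
    rw [tmap_comp hA, h5, nabla_eq_tmap, etaT_tmap hA]
  have hST : tmap A mu th ≫ tmap A mu g = nabla A W eta mu psiW := by
    have hS : tmap A mu th ≫ nabla A V eta mu psiV = tmap A mu th := by
      rw [nabla_eq_tmap, tmap_comp hA, ← nabla_eq_tmap, ← h2]
    rw [nabla, hpsi, ← reassoc_of% rightUnitor_inv_whiskerLeft_naturality,
      ← reassoc_of% hS]
    simp only [nabla, Category.assoc]
  refine ⟨tmap_leftLin hA g, tmap_leftLin hA th, ?_, ?_, hTS, hST⟩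
  · rw [h1, Category.assoc, hST, hW.2.2.2.nu_nabla hA]
  · rw [prodAV_eq_transport hA hV.1.1 sigV sigW (tmap A mu g) th hpsi hsig hTS,
      MonoidalCategory.tensorHom_comp_tensorHom_assoc, hTS,
      reassoc_of% hV.1.tensorHom_nabla_prodAV hA]

end WeakCrossed
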